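/- Let m ≥ 2, let τ ∈ (0,1), let A and B be real m-th order n-dimensional tensors, and define F(x,t) = (t² B − A)x^{m−1} ∈ ℝⁿ, H_τ(x,t) ∈ ℝ^{n+1} with i-th component φ_τ(x_i, F_i(x,t)) for i = 1,…,n and last component xᵀx − 1, where φ_τ(a,b) = τ((a + b) − √(a² + b²)) + (1 − τ)max(a,0)max(b,0). Then the merit function Ψ_τ(z) := ½ H_τ(z)ᵀ H_τ(z) is continuously differentiable on all of ℝ^{n+1}. -/

import Mathlib

open Finset

/-- `(A x^{m-1})_i = ∑_{i₂,…,i_m} a_{i i₂…i_m} x_{i₂}⋯x_{i_m}`. -/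
noncomputable def tApply {m n : ℕ} (hm : 0 < m) (A : (Fin m → Fin n) → ℝ)
    (x : Fin n → ℝ) : Fin n → ℝ := fun i =>
  ∑ f : Fin m → Fin n,
    if f ⟨0, hm⟩ = i then A f * ∏ j : Fin m, (if (j : ℕ) = 0 then 1 else x (f j)) else 0

/-- The penalized Fischer–Burmeister function. -/
noncomputable def phiTau (τ a b : ℝ) : ℝ :=
  τ * ((a + b) - Real.sqrt (a ^ 2 + b ^ 2)) + (1 - τ) * (max a 0 * max b 0)

/-!
`φ_τ` is locally Lipschitz (`√(a² + b²)` is the Euclidean norm, `a₊` and `b₊` are 1-Lipschitz),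
and it is smooth wherever it does not vanish: it vanishes on `{a ≥ 0, b ≥ 0, ab = 0}`, and near
any other point `a₊ b₊` is locally `0` or `ab`, while `a² + b² > 0`.
The square of a locally Lipschitz `g` that is `C¹` off its zeros is `C¹`: at a zero `p`,
`g² = O(‖x - p‖²)` has derivative `0`, and elsewhere the derivative `2 g Dg` is bounded by
`2K|g| → 0`, because the local Lipschitz constant `K` bounds `Dg`.
So `φ_τ²` is `C¹`, and `Ψ_τ` is built from it and polynomial maps.
-/

open Filter Topology Asymptotics

section SqOfLocallyLipschitz

variable {E : Type*} [NormedAddCommGroup E] [NormedSpace ℝ E] {g : E → ℝ}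

theorem hasFDerivAt_sq_of_lipschitzOnWith_of_eq_zero {K : NNReal} {s : Set E} {p : E}
    (hs : s ∈ 𝓝 p) (hg : LipschitzOnWith K g s) (hp : g p = 0) :
    HasFDerivAt (fun x => g x ^ 2) (0 : E →L[ℝ] ℝ) p := by
  have hO : g =O[𝓝 p] fun x => x - p := by
    refine IsBigO.of_bound K ?_
    filter_upwards [hs] with x hx
    simpa [hp] using hg.norm_sub_le hx (mem_of_mem_nhds hs)
  have ho : g =o[𝓝 p] fun _ => (1 : ℝ) := by
    rw [isLittleO_one_iff, ← hp]
    exact (hg.continuousOn.continuousAt hs).tendsto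
  rw [hasFDerivAt_iff_isLittleO]
  simpa [hp, sq] using (ho.mul_isBigO hO.norm_right).norm_right

theorem contDiff_one_sq_of_locallyLipschitz (hg : LocallyLipschitz g)
    (hd : ∀ p, g p ≠ 0 → ContDiffAt ℝ 1 g p) : ContDiff ℝ 1 fun x => g x ^ 2 := by
  rw [contDiff_one_iff_hasFDerivAt]
  refine ⟨fun p => (2 * g p) • fderiv ℝ g p, ?_, fun p => ?_⟩
  · rw [continuous_iff_continuousAt]
    intro p
    by_cases hp : g p = 0
    · obtain ⟨K, s, hs, hK⟩ := hg p
      rw [ContinuousAt, hp, mul_zero, zero_smul, tendsto_zero_iff_norm_tendsto_zero]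
      have hbound : ∀ᶠ x in 𝓝 p, ‖(2 * g x) • fderiv ℝ g x‖ ≤ 2 * K * |g x| := by
        filter_upwards [eventually_mem_nhds_iff.2 hs] with x hx
        rw [norm_smul, Real.norm_eq_abs, abs_mul, abs_two]
        have := norm_fderiv_le_of_lipschitzOn ℝ hx hK
        nlinarith [abs_nonneg (g x)]
      refine squeeze_zero' (Eventually.of_forall fun _ => norm_nonneg _) hbound ?_
      simpa [hp] using ((hK.continuousOn.continuousAt hs).tendsto.abs.const_mul (2 * (K : ℝ)))
    · exact ((continuous_const.mul hg.continuous).continuousAt).smul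
        ((hd p hp).continuousAt_fderiv one_ne_zero)
  · by_cases hp : g p = 0
    · obtain ⟨K, s, hs, hK⟩ := hg p
      simpa [hp] using hasFDerivAt_sq_of_lipschitzOnWith_of_eq_zero hs hK hp
    · simpa using ((hd p hp).differentiableAt one_ne_zero).hasFDerivAt.pow 2

end SqOfLocallyLipschitz

theorem LocallyLipschitz.mul' {α 𝔸 : Type*} [PseudoEMetricSpace α] [NormedRing 𝔸]
    [NormedAlgebra ℝ 𝔸] {f g : α → 𝔸} (hf : LocallyLipschitz f) (hg : LocallyLipschitz g) :
    LocallyLipschitz fun x => f x * g x :=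
  (contDiff_mul (𝕜 := ℝ) (n := 1)).locallyLipschitz.comp (hf.prodMk hg)

theorem locallyLipschitz_sqrt_fst_sq_add_snd_sq :
    LocallyLipschitz fun p : ℝ × ℝ => √(p.1 ^ 2 + p.2 ^ 2) := by
  have h : (fun p : ℝ × ℝ => √(p.1 ^ 2 + p.2 ^ 2)) = fun p => ‖WithLp.toLp 2 p‖ := by
    ext p
    simp [WithLp.prod_norm_eq_of_L2]
  rw [h]
  exact (lipschitzWith_one_norm.comp (WithLp.prod_lipschitzWith_toLp 2 ℝ ℝ)).locallyLipschitz

theorem locallyLipschitz_phiTau (τ : ℝ) : LocallyLipschitz fun p : ℝ × ℝ => phiTau τ p.1 p.2 := by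
  have hfst : LocallyLipschitz (Prod.fst : ℝ × ℝ → ℝ) := LipschitzWith.prod_fst.locallyLipschitz
  have hsnd : LocallyLipschitz (Prod.snd : ℝ × ℝ → ℝ) := LipschitzWith.prod_snd.locallyLipschitz
  exact ((LocallyLipschitz.const τ).mul' ((hfst.add hsnd).sub
    locallyLipschitz_sqrt_fst_sq_add_snd_sq)).add
    ((LocallyLipschitz.const (1 - τ)).mul' ((hfst.max_const 0).mul' (hsnd.max_const 0)))

theorem phiTau_eq_zero {τ a b : ℝ} (ha : 0 ≤ a) (hb : 0 ≤ b) (hab : a * b = 0) :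
    phiTau τ a b = 0 := by
  have hsq : a ^ 2 + b ^ 2 = (a + b) ^ 2 := by linear_combination -2 * hab
  rw [phiTau, hsq, Real.sqrt_sq (add_nonneg ha hb), max_eq_left ha, max_eq_left hb, hab]
  ring

theorem contDiffAt_max_zero_mul_max_zero {k : WithTop ℕ∞} {p : ℝ × ℝ}
    (hp : p.1 < 0 ∨ p.2 < 0 ∨ 0 < p.1 ∧ 0 < p.2) :
    ContDiffAt ℝ k (fun q : ℝ × ℝ => max q.1 0 * max q.2 0) p := by
  rcases hp with h | h | ⟨h₁, h₂⟩
  · refine (contDiffAt_const (c := (0 : ℝ))).congr_of_eventuallyEq ?_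
    filter_upwards [continuous_fst.continuousAt.eventually_lt continuousAt_const h] with q hq
    simp [max_eq_right hq.le]
  · refine (contDiffAt_const (c := (0 : ℝ))).congr_of_eventuallyEq ?_
    filter_upwards [continuous_snd.continuousAt.eventually_lt continuousAt_const h] with q hq
    simp [max_eq_right hq.le]
  · refine (contDiffAt_fst.mul contDiffAt_snd).congr_of_eventuallyEq ?_
    filter_upwards [continuousAt_const.eventually_lt continuous_fst.continuousAt h₁,
      continuousAt_const.eventually_lt continuous_snd.continuousAt h₂] with q hq₁ hq₂
    simp [max_eq_left hq₁.le, max_eq_left hq₂.le]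

theorem contDiffAt_phiTau {k : WithTop ℕ∞} {τ : ℝ} {p : ℝ × ℝ} (hp : phiTau τ p.1 p.2 ≠ 0) :
    ContDiffAt ℝ k (fun q : ℝ × ℝ => phiTau τ q.1 q.2) p := by
  have h : p.1 < 0 ∨ p.2 < 0 ∨ 0 < p.1 ∧ 0 < p.2 := by
    by_contra! h
    obtain ⟨h₁, h₂, h₁₂⟩ := h
    refine hp (phiTau_eq_zero h₁ h₂ ?_)
    rcases h₁.eq_or_lt with h₁ | h₁
    · rw [← h₁, zero_mul]
    · rw [le_antisymm (h₁₂ h₁) h₂, mul_zero]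
  have hr : p.1 ^ 2 + p.2 ^ 2 ≠ 0 := by
    rcases h with h | h | ⟨h, -⟩ <;> nlinarith [sq_nonneg p.1, sq_nonneg p.2]
  unfold phiTau
  exact (contDiffAt_const.mul ((contDiffAt_fst.add contDiffAt_snd).sub
    (((contDiffAt_fst.pow 2).add (contDiffAt_snd.pow 2)).sqrt hr))).add
    (contDiffAt_const.mul (contDiffAt_max_zero_mul_max_zero h))

theorem contDiff_one_phiTau_sq (τ : ℝ) : ContDiff ℝ 1 fun p : ℝ × ℝ => phiTau τ p.1 p.2 ^ 2 :=
  contDiff_one_sq_of_locallyLipschitz (locallyLipschitz_phiTau τ) fun _ hp => contDiffAt_phiTau hp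

theorem contDiff_tApply {E : Type*} [NormedAddCommGroup E] [NormedSpace ℝ E]
    {k : WithTop ℕ∞} {m n : ℕ} (hm : 0 < m) {A : E → (Fin m → Fin n) → ℝ}
    {x : E → Fin n → ℝ} (hA : ∀ f, ContDiff ℝ k fun e => A e f) (hx : ContDiff ℝ k x)
    (i : Fin n) : ContDiff ℝ k fun e => tApply hm (A e) (x e) i := by
  unfold tApply
  refine ContDiff.sum fun f _ => ?_
  split_ifs
  · refine (hA f).mul (contDiff_prod fun j _ => ?_)
    split_ifs
    exacts [contDiff_const, contDiff_pi.1 hx (f j)]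
  · exact contDiff_const

/-- for `τ ∈ (0,1)`, the merit function `Ψ_τ(z) = ½ H_τ(z)ᵀ H_τ(z)`, where
`H_τ(x,t) = (φ_τ(x_i, ((t²B - A)x^{m-1})_i)_{i=1..n}, xᵀx - 1)`, is continuously
differentiable on all of `ℝ^{n+1}`. -/
theorem stmt_14 {m n : ℕ} (hm : 2 ≤ m) (τ : ℝ)
    (A B : (Fin m → Fin n) → ℝ) :
    ContDiff ℝ 1 (fun z : (Fin n → ℝ) × ℝ =>
      (1 / 2 : ℝ) *
        ((∑ i, (phiTau τ (z.1 i)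
            (tApply (show 0 < m by omega) (fun f => z.2 ^ 2 * B f - A f) z.1 i)) ^ 2)
          + ((∑ i, z.1 i * z.1 i) - 1) ^ 2)) := by
  have hx : ContDiff ℝ 1 fun z : (Fin n → ℝ) × ℝ => z.1 := contDiff_fst
  have hF (i : Fin n) : ContDiff ℝ 1 fun z : (Fin n → ℝ) × ℝ =>
      tApply (show 0 < m by omega) (fun f => z.2 ^ 2 * B f - A f) z.1 i :=
    contDiff_tApply _ (fun f => by fun_prop) hx i
  refine contDiff_const.mul (ContDiff.add ?_ ?_)
  · exact ContDiff.sum fun i _ =>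
      (contDiff_one_phiTau_sq τ).comp ((contDiff_pi.1 hx i).prodMk (hF i))
  · fun_prop
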